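/- For m ≥ 4, let B be the m×m zero-one matrix where rows 2 and 3 each have a single 1 in column m, rows 4 through m each have a single 1 in column 1, and row 1 is all zeroes. Then for all n ≥ 2, the number of B-colored plane trees with n vertices is 2^{n-1} + m - 3. -/

import Mathlib

/-!
Colors are elements of `Fin m`, so the paper's color `i` is `i - 1` here.

Color 1 admits no children, so it only labels leaves. A color `c ≥ 4` (in particular `m`) only
admits children of color 1, so a tree of size `n` with root color `c` is the corolla with `n - 1`
leaves. Colors 2 and 3 only admit children of color `m`, so such a tree is a root over a sequence
of corollas whose sizes form a composition of `n - 1`; there are `2^{n-2}` of these. Summing over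
the root color gives `0 + 2 · 2^{n-2} + (m - 3)`.
-/

inductive CTree (α : Type) : Type
  | node : α → List (CTree α) → CTree α

namespace CTree

def color {α : Type} : CTree α → α
  | node c _ => c

def children {α : Type} : CTree α → List (CTree α)
  | node _ ts => ts

def size {α : Type} : CTree α → ℕ
  | node _ ts => 1 + (ts.attach.map fun t => size t.1).sum
decreasing_by
  have := List.sizeOf_lt_of_mem t.2
  simp only [CTree.node.sizeOf_spec]
  omega

def Valid {α : Type} (A : Matrix α α ℕ) : CTree α → Prop
  | node c ts => ∀ t ∈ ts, A c t.color = 1 ∧ Valid A t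

end CTree

noncomputable def colorCount {m : ℕ} (A : Matrix (Fin m) (Fin m) ℕ) (i : Fin m) (n : ℕ) : ℕ :=
  {t : CTree (Fin m) | t.Valid A ∧ t.size = n ∧ t.color = i}.ncard

noncomputable def totalCount {α : Type} (A : Matrix α α ℕ) (n : ℕ) : ℕ :=
  {t : CTree α | t.Valid A ∧ t.size = n}.ncard

namespace CTree

variable {α : Type}

@[simp] theorem color_node (c : α) (ts : List (CTree α)) : (node c ts).color = c := rfl


@[simp] theorem size_node (c : α) (ts : List (CTree α)) :
    (node c ts).size = 1 + (ts.map size).sum := by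
  rw [size]
  exact congrArg (1 + ·) (congrArg List.sum (List.attach_map_val (l := ts) (f := size)))

theorem one_le_size (t : CTree α) : 1 ≤ t.size := by
  cases t; simp

@[simp] theorem valid_node (A : Matrix α α ℕ) (c : α) (ts : List (CTree α)) :
    Valid A (node c ts) ↔ ∀ t ∈ ts, A c t.color = 1 ∧ Valid A t := by
  rw [Valid]

def corolla (c d : α) (k : ℕ) : CTree α :=
  node c (List.replicate k (node d []))

@[simp] theorem size_corolla (c d : α) (k : ℕ) : (corolla c d k).size = k + 1 := by
  simp [corolla, add_comm]

variable {A : Matrix α α ℕ} {c d e : α}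

theorem valid_corolla (h : A c d = 1) (k : ℕ) : Valid A (corolla c d k) := by
  simp [corolla, List.mem_replicate, h]

theorem eq_nil_of_valid_node (h : ∀ j, A c j ≠ 1) {ts : List (CTree α)}
    (hv : Valid A (node c ts)) : ts = [] :=
  List.eq_nil_iff_forall_not_mem.2 fun t ht => h _ ((valid_node A c ts).1 hv t ht).1

theorem eq_corolla_of_valid (hc : ∀ j, A c j = 1 → j = d) (hd : ∀ j, A d j ≠ 1)
    {t : CTree α} (hv : Valid A t) (ht : t.color = c) : t = corolla c d (t.size - 1) := by
  obtain ⟨c', ts⟩ := t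
  obtain rfl : c = c' := ht.symm
  have leaves : ∀ t ∈ ts, t = node d [] := by
    rintro ⟨d', ts'⟩ ht'
    obtain ⟨hA, hv'⟩ := (valid_node A c ts).1 hv _ ht'
    obtain rfl : d' = d := hc _ hA
    rw [eq_nil_of_valid_node hd hv']
  rw [List.eq_replicate_length.2 leaves]
  simp [corolla, List.sum_replicate]

def ofComposition (c d e : α) {k : ℕ} (p : Composition k) : CTree α :=
  node c (p.blocks.map fun b => corolla d e (b - 1))

theorem map_size_corolla_blocks {k : ℕ} (p : Composition k) :
    (p.blocks.map fun b => corolla d e (b - 1)).map size = p.blocks := by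
  rw [List.map_map]
  refine (List.map_congr_left fun b hb => ?_).trans (List.map_id _)
  have := p.blocks_pos hb
  simp only [Function.comp, size_corolla, id]
  omega

theorem size_ofComposition {k : ℕ} (p : Composition k) :
    (ofComposition c d e p).size = k + 1 := by
  rw [ofComposition, size_node, map_size_corolla_blocks, p.blocks_sum, add_comm]

theorem ofComposition_injective (k : ℕ) :
    Function.Injective (ofComposition c d e : Composition k → CTree α) := by
  intro p q h
  have := congrArg (List.map size) (node.inj h).2
  rw [map_size_corolla_blocks, map_size_corolla_blocks] at this
  exact Composition.ext this

theorem valid_ofComposition (hcd : A c d = 1) (hde : A d e = 1) {k : ℕ} (p : Composition k) :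
    Valid A (ofComposition c d e p) := by
  simp only [ofComposition, valid_node, List.mem_map]
  rintro _ ⟨b, -, rfl⟩
  exact ⟨hcd, valid_corolla hde _⟩

theorem exists_ofComposition_of_valid (hc : ∀ j, A c j = 1 → j = d)
    (hd : ∀ j, A d j = 1 → j = e) (he : ∀ j, A e j ≠ 1) {k : ℕ} {t : CTree α}
    (hv : Valid A t) (hs : t.size = k + 1) (ht : t.color = c) :
    ∃ p : Composition k, ofComposition c d e p = t := by
  obtain ⟨c', ts⟩ := t
  obtain rfl : c = c' := ht.symm
  rw [size_node] at hs
  refine ⟨⟨ts.map size, fun {b} hb => ?_, by omega⟩, ?_⟩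
  · obtain ⟨t, -, rfl⟩ := List.mem_map.1 hb
    exact one_le_size t
  · rw [ofComposition, List.map_map]
    refine congrArg (node c) ((List.map_congr_left fun t ht => ?_).trans (List.map_id _))
    obtain ⟨hA, hv'⟩ := (valid_node A c ts).1 hv t ht
    exact (eq_corolla_of_valid hd he hv' (hc _ hA)).symm

theorem setOf_valid_color_eq_empty (h : ∀ j, A c j ≠ 1) {n : ℕ} (hn : n ≠ 1) :
    {t : CTree α | t.Valid A ∧ t.size = n ∧ t.color = c} = ∅ := by
  refine Set.eq_empty_of_forall_notMem ?_
  rintro ⟨c', ts⟩ ⟨hv, hs, ht⟩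
  obtain rfl : c = c' := ht.symm
  rw [eq_nil_of_valid_node h hv] at hs
  exact hn (by simpa using hs.symm)

theorem setOf_valid_color_eq_singleton (hc : ∀ j, A c j = 1 ↔ j = d) (hd : ∀ j, A d j ≠ 1)
    (k : ℕ) : {t : CTree α | t.Valid A ∧ t.size = k + 1 ∧ t.color = c} = {corolla c d k} := by
  ext t
  constructor
  · rintro ⟨hv, hs, ht⟩
    rw [eq_corolla_of_valid (fun j => (hc j).1) hd hv ht, hs, Nat.add_sub_cancel]
    rfl
  · rintro rfl
    exact ⟨valid_corolla ((hc d).2 rfl) k, size_corolla c d k, rfl⟩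

theorem setOf_valid_color_eq_range (hc : ∀ j, A c j = 1 ↔ j = d) (hd : ∀ j, A d j = 1 ↔ j = e)
    (he : ∀ j, A e j ≠ 1) (k : ℕ) :
    {t : CTree α | t.Valid A ∧ t.size = k + 1 ∧ t.color = c} =
      Set.range (ofComposition c d e : Composition k → CTree α) := by
  ext t
  constructor
  · rintro ⟨hv, hs, ht⟩
    exact exists_ofComposition_of_valid (fun j => (hc j).1) (fun j => (hd j).1) he hv hs ht
  · rintro ⟨p, rfl⟩
    exact ⟨valid_ofComposition ((hc d).2 rfl) ((hd e).2 rfl) p, size_ofComposition p, rfl⟩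

end CTree

open CTree

theorem totalCount_eq_sum_of_encard_color {α : Type} [Fintype α] {A : Matrix α α ℕ} {n : ℕ}
    {f : α → ℕ}
    (h : ∀ c, {t : CTree α | t.Valid A ∧ t.size = n ∧ t.color = c}.encard = f c) :
    totalCount A n = ∑ c, f c := by
  have hunion : {t : CTree α | t.Valid A ∧ t.size = n} =
      ⋃ c, {t : CTree α | t.Valid A ∧ t.size = n ∧ t.color = c} := by
    ext t
    simp
  have hdisj : Pairwise fun c c' => Disjoint
      {t : CTree α | t.Valid A ∧ t.size = n ∧ t.color = c}
      {t : CTree α | t.Valid A ∧ t.size = n ∧ t.color = c'} :=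
    fun c c' hne => Set.disjoint_left.2 fun t h h' => hne (h.2.2.symm.trans h'.2.2)
  rw [totalCount, Set.ncard_def, hunion, Set.encard_iUnion_of_finite hdisj,
    finsum_eq_sum_of_fintype, Finset.sum_congr rfl fun c _ => h c, ← Nat.cast_sum,
    ENat.toNat_natCast]

def heightTwoMatrix (m : ℕ) : Matrix (Fin m) (Fin m) ℕ := fun i j =>
  if i.val = 1 ∨ i.val = 2 then (if j.val = m - 1 then 1 else 0)
  else if 3 ≤ i.val then (if j.val = 0 then 1 else 0) else 0

def heightTwoCount (k i : ℕ) : ℕ :=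
  if i = 0 then 0 else if i ≤ 2 then 2 ^ k else 1

theorem encard_setOf_valid_heightTwoMatrix {m : ℕ} (hm : 4 ≤ m) (k : ℕ) (i : Fin m) :
    {t : CTree (Fin m) | t.Valid (heightTwoMatrix m) ∧ t.size = k + 2 ∧ t.color = i}.encard =
      heightTwoCount k i := by
  set bot : Fin m := ⟨0, by omega⟩
  set top : Fin m := ⟨m - 1, by omega⟩
  have row_zero : ∀ j, heightTwoMatrix m bot j ≠ 1 := by
    intro j; simp [heightTwoMatrix, bot]
  have row_low : ∀ i : Fin m, i.val = 1 ∨ i.val = 2 →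
      ∀ j, heightTwoMatrix m i j = 1 ↔ j = top := by
    intro i hi j; simp [heightTwoMatrix, hi, top, Fin.ext_iff]
  have row_high : ∀ i : Fin m, 3 ≤ i.val → ∀ j, heightTwoMatrix m i j = 1 ↔ j = bot := by
    intro i hi j
    have : ¬(i.val = 1 ∨ i.val = 2) := by omega
    simp [heightTwoMatrix, hi, this, bot, Fin.ext_iff]
  by_cases hi0 : i.val = 0
  · obtain rfl : i = bot := Fin.ext hi0
    rw [setOf_valid_color_eq_empty row_zero (by omega)]
    simp [heightTwoCount, bot]
  by_cases hi2 : i.val ≤ 2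
  · rw [setOf_valid_color_eq_range (row_low i (by omega)) (row_high top (by simp [top]; omega))
      row_zero (k + 1), ← Set.image_univ, (ofComposition_injective _).encard_image, Set.encard_univ,
      ENat.card_eq_coe_fintype_card, composition_card]
    simp [heightTwoCount, hi0, hi2]
  · rw [setOf_valid_color_eq_singleton (row_high i (by omega)) row_zero (k + 1)]
    simp [heightTwoCount, hi0, hi2]

theorem sum_heightTwoCount {m : ℕ} (hm : 3 ≤ m) (k : ℕ) :
    ∑ i : Fin m, heightTwoCount k i = 2 ^ (k + 1) + m - 3 := by
  obtain ⟨l, rfl⟩ : ∃ l, m = l + 3 := ⟨m - 3, by omega⟩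
  rw [Fin.sum_univ_eq_sum_range (heightTwoCount k), Finset.sum_range_succ', Finset.sum_range_succ',
    Finset.sum_range_succ', Nat.add_sub_assoc (by omega), pow_succ]
  simp [heightTwoCount, mul_two, add_comm, add_left_comm]

/-- For `m ≥ 4`, the matrix whose rows 2 and 3 have a single one in column `m`, whose rows
`4..m` have a single one in column 1, and whose row 1 is zero, has counting sequence
`2^{n-1} + m - 3` for `n ≥ 2`. -/
theorem stmt13 (m : ℕ) (hm : 4 ≤ m) (B : Matrix (Fin m) (Fin m) ℕ)
    (hB : ∀ i j : Fin m,
      B i j = if i.val = 1 ∨ i.val = 2 then (if j.val = m - 1 then 1 else 0)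
        else if 3 ≤ i.val then (if j.val = 0 then 1 else 0) else 0)
    (n : ℕ) (hn : 2 ≤ n) :
    totalCount B n = 2 ^ (n - 1) + m - 3 := by
  obtain rfl : B = heightTwoMatrix m := Matrix.ext hB
  obtain ⟨k, rfl⟩ : ∃ k, n = k + 2 := ⟨n - 2, by omega⟩
  rw [totalCount_eq_sum_of_encard_color (encard_setOf_valid_heightTwoMatrix hm k),
    sum_heightTwoCount (by omega)]
  rfl
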